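/- arXiv:0907.2353 — 6 statements merged into one kernel-verified Lean document; each statement's English description precedes it below -/
import Mathlib

section
/- (Jarlskog, n = 3.) Let a_1, a_2, a_3 and b_1, b_2, b_3 be real numbers, let D = diag(a_1, a_2, a_3) and D' = diag(b_1, b_2, b_3), and let V be a 3×3 unitary matrix. Then det(D V D' V† − V D' V† D) = 2i · T · B · Im(V_{11} V_{22} conj(V_{12}) conj(V_{21})), where T = (a_1 − a_2)(a_2 − a_3)(a_3 − a_1) and B = (b_1 − b_2)(b_2 − b_3)(b_3 − b_1). -/
open Matrix ComplexConjugate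

set_option maxHeartbeats 4000000 in
set_option maxRecDepth 100000 in
theorem aux2 (b0 b1 b2 v00 w00 v01 w01 v02 w02 v10 w10 v11 w11 v12 w12 v20 w20 v21 w21 v22 w22 : ℂ)
    (hr00 : v00 * w00 + v01 * w01 + v02 * w02 = 1)
    (hr01 : v00 * w10 + v01 * w11 + v02 * w12 = 0)
    (hr02 : v00 * w20 + v01 * w21 + v02 * w22 = 0)
    (hr10 : v10 * w00 + v11 * w01 + v12 * w02 = 0)
    (hr12 : v10 * w20 + v11 * w21 + v12 * w22 = 0)
    (hr20 : v20 * w00 + v21 * w01 + v22 * w02 = 0)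
    (hr21 : v20 * w10 + v21 * w11 + v22 * w12 = 0)
    (hr22 : v20 * w20 + v21 * w21 + v22 * w22 = 1)
    (hc11 : v01 * w01 + v11 * w11 + v21 * w21 = 1)
    (hc12 : v01 * w02 + v11 * w12 + v21 * w22 = 0)
    (hc21 : v02 * w01 + v12 * w11 + v22 * w21 = 0)
    (hc22 : v02 * w02 + v12 * w12 + v22 * w22 = 1) :
    (b0 * v00 * w10 + b1 * v01 * w11 + b2 * v02 * w12) * (b0 * v10 * w20 + b1 * v11 * w21 + b2 * v12 * w22) * (b0 * v20 * w00 + b1 * v21 * w01 + b2 * v22 * w02) - (b0 * v00 * w20 + b1 * v01 * w21 + b2 * v02 * w22) * (b0 * v10 * w00 + b1 * v11 * w01 + b2 * v12 * w02) * (b0 * v20 * w10 + b1 * v21 * w11 + b2 * v22 * w12)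
      = (b0 - b1) * (b1 - b2) * (b2 - b0) * (v00 * v11 * w01 * w10 - w00 * w11 * v01 * v10) := by
  linear_combination (norm := ring1)
      (v12 * v20 * w10 * w22 * b0 * b0 * b2 + v11 * v20 * w10 * w21 * b0 * b0 * b1 + ((-1) : ℂ) * v10 * v22 * w12 * w20 * b0 * b0 * b2 + ((-1) : ℂ) * v10 * v21 * w11 * w20 * b0 * b0 * b1) * hr00 +
        (v12 * v22 * w02 * w22 * b0 * b2 * b2 + v12 * v21 * w01 * w22 * b0 * b1 * b2 + ((-1) : ℂ) * v12 * v20 * w02 * w20 * b0 * b0 * b2 + ((-1) : ℂ) * v11 * w01 * b1 * b2 * b2 + v11 * w01 * b1 * b1 * b2 + v11 * w01 * b0 * b2 * b2 + ((-1) : ℂ) * v11 * w01 * b0 * b1 * b1 + ((-1) : ℂ) * v11 * w01 * b0 * b0 * b2 + v11 * w01 * b0 * b0 * b1 + v11 * v22 * w02 * w21 * b0 * b1 * b2 + v11 * v21 * w01 * w21 * b0 * b1 * b1 + ((-1) : ℂ) * v11 * v20 * w01 * w20 * b0 * b0 * b1 + v10 * v22 * w02 * w20 * b0 * b0 * b2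 + v10 * v21 * w01 * w20 * b0 * b0 * b1) * hr01 +
        (((-1) : ℂ) * v12 * v22 * w02 * w12 * b0 * b2 * b2 + ((-1) : ℂ) * v12 * v21 * w02 * w11 * b0 * b1 * b2 + ((-1) : ℂ) * v11 * v22 * w01 * w12 * b0 * b1 * b2 + ((-1) : ℂ) * v11 * v21 * w01 * w11 * b0 * b1 * b1) * hr02 +
        (((-1) : ℂ) * v02 * v22 * w12 * w22 * b0 * b2 * b2 + ((-1) : ℂ) * v02 * v21 * w11 * w22 * b0 * b1 * b2 + v02 * v20 * w12 * w20 * b0 * b0 * b2 + ((-1) : ℂ) * v02 * v20 * w10 * w22 * b0 * b0 * b2 + v01 * w11 * b1 * b2 * b2 + ((-1) : ℂ) * v01 * w11 * b1 * b1 * b2 + ((-1) : ℂ) * v01 * w11 * b0 * b2 * b2 + v01 * w11 * b0 * b1 * b1 + v01 * w11 * b0 * b0 * b2 + ((-1) : ℂ) * v01 * w11 * b0 * b0 * b1 + ((-1) : ℂ) * v01 * v22 * w12 * w21 * b0 * b1 * b2 + ((-1) : ℂ) * v01 * v21 * w11 * w21 * b0 * b1 * b1 + v01 * v20 * w11 *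 w20 * b0 * b0 * b1 + ((-1) : ℂ) * v01 * v20 * w10 * w21 * b0 * b0 * b1) * hr10 +
        (((-1) : ℂ) * v22 * w12 * b0 * b0 * b2 + ((-1) : ℂ) * v21 * w11 * b0 * b0 * b1 + v02 * v22 * w02 * w12 * b0 * b2 * b2 + v02 * v21 * w02 * w11 * b0 * b0 * b1 + v02 * v21 * w01 * w12 * b0 * b1 * b2 + ((-1) : ℂ) * v02 * v21 * w01 * w12 * b0 * b0 * b1 + v01 * v22 * w02 * w11 * b0 * b1 * b2 + ((-1) : ℂ) * v01 * v22 * w02 * w11 * b0 * b0 * b2 + v01 * v22 * w01 * w12 * b0 * b0 * b2 + v01 * v21 * w01 * w11 * b0 * b1 * b1) * hr12 +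
        (v02 * v12 * w12 * w22 * b0 * b2 * b2 + v02 * v11 * w12 * w21 * b0 * b1 * b2 + v01 * v12 * w11 * w22 * b0 * b1 * b2 + v01 * v11 * w11 * w21 * b0 * b1 * b1) * hr20 +
        (v12 * w22 * b0 * b0 * b2 + v11 * w21 * b0 * b0 * b1 + ((-1) : ℂ) * v02 * v12 * w02 * w22 * b0 * b2 * b2 + ((-1) : ℂ) * v02 * v11 * w02 * w21 * b0 * b0 * b1 + ((-1) : ℂ) * v02 * v11 * w01 * w22 * b0 * b1 * b2 + v02 * v11 * w01 * w22 * b0 * b0 * b2 + ((-1) : ℂ) * v01 * v12 * w02 * w21 * b0 * b1 * b2 + v01 * v12 * w02 * w21 * b0 * b0 * b1 + ((-1) : ℂ) * v01 * v12 * w01 * w22 * b0 * b0 * b2 + ((-1) : ℂ) * v01 * v11 * w01 * w21 * b0 * b1 * b1) * hr21 +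
        (((-1) : ℂ) * v02 * v11 * w01 * w12 * b0 * b0 * b2 + v02 * v11 * w01 * w12 * b0 * b0 * b1 + v01 * v12 * w02 * w11 * b0 * b0 * b2 + ((-1) : ℂ) * v01 * v12 * w02 * w11 * b0 * b0 * b1) * hr22 +
        (v12 * v21 * w11 * w22 * b1 * b1 * b2 + ((-2) : ℂ) * v12 * v21 * w11 * w22 * b0 * b1 * b2 + ((-1) : ℂ) * v12 * v21 * w11 * w22 * b0 * b1 * b1 + v12 * v21 * w11 * w22 * b0 * b0 * b2 + ((-1) : ℂ) * v11 * v22 * w12 * w21 * b1 * b1 * b2 + (2) * v11 * v22 * w12 * w21 * b0 * b1 * b2 + v11 * v22 * w12 * w21 * b0 * b1 * b1 + ((-1) : ℂ) * v11 * v22 * w12 * w21 * b0 * b0 * b2) * hc11 +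
        (((-1) : ℂ) * v12 * w11 * b1 * b2 * b2 + v12 * w11 * b1 * b1 * b2 + v12 * w11 * b0 * b2 * b2 + ((-1) : ℂ) * v12 * w11 * b0 * b1 * b1 + ((-1) : ℂ) * v12 * v22 * w12 * w21 * b1 * b2 * b2 + v12 * v22 * w12 * w21 * b0 * b2 * b2 + (2) * v12 * v22 * w12 * w21 * b0 * b1 * b2 + ((-1) : ℂ) * v12 * v22 * w12 * w21 * b0 * b0 * b1 + v12 * v22 * w11 * w22 * b1 * b2 * b2 + ((-1) : ℂ) * v12 * v22 * w11 * w22 * b0 * b2 * b2 + ((-2) : ℂ) * v12 * v22 * w11 * w22 * b0 * b1 * b2 + v12 * v22 * w11 * w22 * b0 * b0 * b1 + ((-1) : ℂ) * v12 * v21 * w11 * w21 * b1 * b1 * b2 + (2) * v12 * v21 * w11 * w21 * b0 * b1 * b2 + v12 * v21 * w11 * w21 * b0 * b1 * b1 + ((-1) : ℂ) * v12 * v21 * w11 * w21 * b0 * b0 * b2 + v11 * v22 * w11 * w21 * b1 * b1 * b2 + ((-2) : ℂ) * v11 * v22 * w11 * w21 * b0 * b1 * b2 + ((-1) : ℂ)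 * v11 * v22 * w11 * w21 * b0 * b1 * b1 + v11 * v22 * w11 * w21 * b0 * b0 * b2) * hc12 +
        (v12 * v21 * w12 * w22 * b1 * b2 * b2 + ((-1) : ℂ) * v12 * v21 * w12 * w22 * b0 * b2 * b2 + ((-2) : ℂ) * v12 * v21 * w12 * w22 * b0 * b1 * b2 + v12 * v21 * w12 * w22 * b0 * b0 * b1 + v11 * w12 * b1 * b2 * b2 + ((-1) : ℂ) * v11 * w12 * b1 * b1 * b2 + ((-1) : ℂ) * v11 * w12 * b0 * b2 * b2 + v11 * w12 * b0 * b1 * b1 + ((-1) : ℂ) * v11 * v22 * w12 * w22 * b1 * b2 * b2 + v11 * v22 * w12 * w22 * b0 * b2 * b2 + (2) * v11 * v22 * w12 * w22 * b0 * b1 * b2 + ((-1) : ℂ) * v11 * v22 * w12 * w22 * b0 * b0 * b1 + v11 * v21 * w12 * w21 * b1 * b1 * b2 + ((-2) : ℂ) * v11 * v21 * w12 * w21 * b0 * b1 * b2 + ((-1) : ℂ) * v11 * v21 * w12 * w21 * b0 * b1 * b1 + v11 * v21 * w12 * w21 * b0 * b0 * b2 + ((-1) : ℂ) * v11 * v21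 * w11 * w22 * b1 * b1 * b2 + (2) * v11 * v21 * w11 * w22 * b0 * b1 * b2 + v11 * v21 * w11 * w22 * b0 * b1 * b1 + ((-1) : ℂ) * v11 * v21 * w11 * w22 * b0 * b0 * b2) * hc21 +
        (((-1) : ℂ) * v12 * v21 * w11 * w22 * b1 * b2 * b2 + v12 * v21 * w11 * w22 * b0 * b2 * b2 + (2) * v12 * v21 * w11 * w22 * b0 * b1 * b2 + ((-1) : ℂ) * v12 * v21 * w11 * w22 * b0 * b0 * b1 + v11 * v22 * w12 * w21 * b1 * b2 * b2 + ((-1) : ℂ) * v11 * v22 * w12 * w21 * b0 * b2 * b2 + ((-2) : ℂ) * v11 * v22 * w12 * w21 * b0 * b1 * b2 + v11 * v22 * w12 * w21 * b0 * b0 * b1) * hc22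
set_option maxHeartbeats 4000000 in
set_option maxRecDepth 100000 in
theorem aux3 (a0 a1 a2 b0 b1 b2 v00 w00 v01 w01 v02 w02 v10 w10 v11 w11 v12 w12 v20 w20 v21 w21 v22 w22 : ℂ)
    (hr00 : v00 * w00 + v01 * w01 + v02 * w02 = 1)
    (hr01 : v00 * w10 + v01 * w11 + v02 * w12 = 0)
    (hr02 : v00 * w20 + v01 * w21 + v02 * w22 = 0)
    (hr10 : v10 * w00 + v11 * w01 + v12 * w02 = 0)
    (hr12 : v10 * w20 + v11 * w21 + v12 * w22 = 0)
    (hr20 : v20 * w00 + v21 * w01 + v22 * w02 = 0)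
    (hr21 : v20 * w10 + v21 * w11 + v22 * w12 = 0)
    (hr22 : v20 * w20 + v21 * w21 + v22 * w22 = 1)
    (hc11 : v01 * w01 + v11 * w11 + v21 * w21 = 1)
    (hc12 : v01 * w02 + v11 * w12 + v21 * w22 = 0)
    (hc21 : v02 * w01 + v12 * w11 + v22 * w21 = 0)
    (hc22 : v02 * w02 + v12 * w12 + v22 * w22 = 1) :
    ((a0 - a0) * (b0 * v00 * w00 + b1 * v01 * w01 + b2 * v02 * w02)) * ((a1 - a1) * (b0 * v10 * w10 + b1 * v11 * w11 + b2 * v12 * w12)) * ((a2 - a2) * (b0 * v20 * w20 + b1 * v21 * w21 + b2 * v22 * w22)) - ((a0 - a0) * (b0 * v00 * w00 + b1 * v01 * w01 + b2 * v02 * w02)) * ((a1 - a2) * (b0 * v10 * w20 + b1 * v11 * w21 + b2 * v12 * w22)) * ((a2 - a1) * (b0 * v20 * w10 + b1 * v21 * w11 + b2 * v22 * w12)) - ((a0 - a1) * (b0 * v00 * w10 + b1 * v01 * w11 + b2 * v02 * w12)) * ((a1 - a0) * (b0 * v10 * w00 + b1 * v11 * w01 + b2 * v12 * w02)) * ((a2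 - a2) * (b0 * v20 * w20 + b1 * v21 * w21 + b2 * v22 * w22)) + ((a0 - a1) * (b0 * v00 * w10 + b1 * v01 * w11 + b2 * v02 * w12)) * ((a1 - a2) * (b0 * v10 * w20 + b1 * v11 * w21 + b2 * v12 * w22)) * ((a2 - a0) * (b0 * v20 * w00 + b1 * v21 * w01 + b2 * v22 * w02)) + ((a0 - a2) * (b0 * v00 * w20 + b1 * v01 * w21 + b2 * v02 * w22)) * ((a1 - a0) * (b0 * v10 * w00 + b1 * v11 * w01 + b2 * v12 * w02)) * ((a2 - a1) * (b0 * v20 * w10 + b1 * v21 * w11 + b2 * v22 * w12)) - ((a0 - a2) * (b0 * v00 * w20 + b1 * v01 * w21 + b2 * v02 * w22)) * ((a1 - a1) * (b0 * v10 * w10 + b1 * v11 * w11 + b2 * v12 * w12)) * ((a2 - a0) * (b0 * v20 * w00 + b1 * v21 * w01 + b2 * v22 * w02))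
      = (a0 - a1) * (a1 - a2) * (a2 - a0) * ((b0 - b1) * (b1 - b2) * (b2 - b0))
        * (v00 * v11 * w01 * w10 - w00 * w11 * v01 * v10) := by
  have h := aux2 b0 b1 b2 v00 w00 v01 w01 v02 w02 v10 w10 v11 w11 v12 w12 v20 w20 v21 w21 v22 w22 hr00 hr01 hr02 hr10 hr12 hr20 hr21 hr22 hc11 hc12 hc21 hc22
  linear_combination (norm := ring1) ((a0 - a1) * (a1 - a2) * (a2 - a0)) * h

set_option maxHeartbeats 4000000 in
set_option maxRecDepth 100000 in
/-- Jarlskog's determinant for n = 3. -/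
theorem jarlskog_det_three (a b : Fin 3 → ℝ) (V : Matrix (Fin 3) (Fin 3) ℂ)
    (hV : V ∈ Matrix.unitaryGroup (Fin 3) ℂ) :
    (Matrix.diagonal (fun i => (a i : ℂ)) * V * Matrix.diagonal (fun i => (b i : ℂ)) * Vᴴ
        - V * Matrix.diagonal (fun i => (b i : ℂ)) * Vᴴ
            * Matrix.diagonal (fun i => (a i : ℂ))).det
      = 2 * Complex.I * (((a 0 - a 1) * (a 1 - a 2) * (a 2 - a 0) : ℝ) : ℂ)
          * (((b 0 - b 1) * (b 1 - b 2) * (b 2 - b 0) : ℝ) : ℂ)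
          * (((V 0 0 * V 1 1 * conj (V 0 1) * conj (V 1 0)).im : ℝ) : ℂ) := by
  have h1 : V * Vᴴ = 1 := hV.2
  have h2 : Vᴴ * V = 1 := hV.1
  have hr00 : V 0 0 * conj (V 0 0) + V 0 1 * conj (V 0 1) + V 0 2 * conj (V 0 2) = (1 : ℂ) := by
    have := congrFun (congrFun h1 0) 0
    simp [Matrix.mul_apply, Fin.sum_univ_three, Matrix.conjTranspose_apply,
      Matrix.one_apply] at this
    linear_combination this
  have hr01 : V 0 0 * conj (V 1 0) + V 0 1 * conj (V 1 1) + V 0 2 * conj (V 1 2) = (0 : ℂ) := by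
    have := congrFun (congrFun h1 0) 1
    simp [Matrix.mul_apply, Fin.sum_univ_three, Matrix.conjTranspose_apply,
      Matrix.one_apply] at this
    linear_combination this
  have hr02 : V 0 0 * conj (V 2 0) + V 0 1 * conj (V 2 1) + V 0 2 * conj (V 2 2) = (0 : ℂ) := by
    have := congrFun (congrFun h1 0) 2
    simp [Matrix.mul_apply, Fin.sum_univ_three, Matrix.conjTranspose_apply,
      Matrix.one_apply] at this
    linear_combination this
  have hr10 : V 1 0 * conj (V 0 0) + V 1 1 * conj (V 0 1) + V 1 2 * conj (V 0 2) = (0 : ℂ) := by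
    have := congrFun (congrFun h1 1) 0
    simp [Matrix.mul_apply, Fin.sum_univ_three, Matrix.conjTranspose_apply,
      Matrix.one_apply] at this
    linear_combination this
  have hr12 : V 1 0 * conj (V 2 0) + V 1 1 * conj (V 2 1) + V 1 2 * conj (V 2 2) = (0 : ℂ) := by
    have := congrFun (congrFun h1 1) 2
    simp [Matrix.mul_apply, Fin.sum_univ_three, Matrix.conjTranspose_apply,
      Matrix.one_apply] at this
    linear_combination this
  have hr20 : V 2 0 * conj (V 0 0) + V 2 1 * conj (V 0 1) + V 2 2 * conj (V 0 2) = (0 : ℂ) := by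
    have := congrFun (congrFun h1 2) 0
    simp [Matrix.mul_apply, Fin.sum_univ_three, Matrix.conjTranspose_apply,
      Matrix.one_apply] at this
    linear_combination this
  have hr21 : V 2 0 * conj (V 1 0) + V 2 1 * conj (V 1 1) + V 2 2 * conj (V 1 2) = (0 : ℂ) := by
    have := congrFun (congrFun h1 2) 1
    simp [Matrix.mul_apply, Fin.sum_univ_three, Matrix.conjTranspose_apply,
      Matrix.one_apply] at this
    linear_combination this
  have hr22 : V 2 0 * conj (V 2 0) + V 2 1 * conj (V 2 1) + V 2 2 * conj (V 2 2) = (1 : ℂ) := by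
    have := congrFun (congrFun h1 2) 2
    simp [Matrix.mul_apply, Fin.sum_univ_three, Matrix.conjTranspose_apply,
      Matrix.one_apply] at this
    linear_combination this
  have hc11 : V 0 1 * conj (V 0 1) + V 1 1 * conj (V 1 1) + V 2 1 * conj (V 2 1) = (1 : ℂ) := by
    have := congrFun (congrFun h2 1) 1
    simp [Matrix.mul_apply, Fin.sum_univ_three, Matrix.conjTranspose_apply,
      Matrix.one_apply] at this
    linear_combination this
  have hc12 : V 0 1 * conj (V 0 2) + V 1 1 * conj (V 1 2) + V 2 1 * conj (V 2 2) = (0 : ℂ) := by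
    have := congrFun (congrFun h2 2) 1
    simp [Matrix.mul_apply, Fin.sum_univ_three, Matrix.conjTranspose_apply,
      Matrix.one_apply] at this
    linear_combination this
  have hc21 : V 0 2 * conj (V 0 1) + V 1 2 * conj (V 1 1) + V 2 2 * conj (V 2 1) = (0 : ℂ) := by
    have := congrFun (congrFun h2 1) 2
    simp [Matrix.mul_apply, Fin.sum_univ_three, Matrix.conjTranspose_apply,
      Matrix.one_apply] at this
    linear_combination this
  have hc22 : V 0 2 * conj (V 0 2) + V 1 2 * conj (V 1 2) + V 2 2 * conj (V 2 2) = (1 : ℂ) := by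
    have := congrFun (congrFun h2 2) 2
    simp [Matrix.mul_apply, Fin.sum_univ_three, Matrix.conjTranspose_apply,
      Matrix.one_apply] at this
    linear_combination this
  have hJ : 2 * Complex.I * (((V 0 0 * V 1 1 * conj (V 0 1) * conj (V 1 0)).im : ℝ) : ℂ)
      = V 0 0 * V 1 1 * conj (V 0 1) * conj (V 1 0)
        - conj (V 0 0) * conj (V 1 1) * V 0 1 * V 1 0 := by
    have h := Complex.sub_conj (V 0 0 * V 1 1 * conj (V 0 1) * conj (V 1 0))
    simp only [_root_.map_mul, Complex.conj_conj] at h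
    push_cast at h ⊢
    linear_combination -h
  have hA := aux3 ((a 0 : ℝ) : ℂ) ((a 1 : ℝ) : ℂ) ((a 2 : ℝ) : ℂ) ((b 0 : ℝ) : ℂ) ((b 1 : ℝ) : ℂ) ((b 2 : ℝ) : ℂ) (V 0 0) (conj (V 0 0)) (V 0 1) (conj (V 0 1)) (V 0 2) (conj (V 0 2)) (V 1 0) (conj (V 1 0)) (V 1 1) (conj (V 1 1)) (V 1 2) (conj (V 1 2)) (V 2 0) (conj (V 2 0)) (V 2 1) (conj (V 2 1)) (V 2 2) (conj (V 2 2))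
    hr00 hr01 hr02 hr10 hr12 hr20 hr21 hr22 hc11 hc12 hc21 hc22
  have e00 : (Matrix.diagonal (fun i => (a i : ℂ)) * V * Matrix.diagonal (fun i => (b i : ℂ)) * Vᴴ
        - V * Matrix.diagonal (fun i => (b i : ℂ)) * Vᴴ
            * Matrix.diagonal (fun i => (a i : ℂ))) 0 0 = (((a 0 : ℝ) : ℂ) - ((a 0 : ℝ) : ℂ)) * (((b 0 : ℝ) : ℂ) * V 0 0 * conj (V 0 0) + ((b 1 : ℝ) : ℂ) * V 0 1 * conj (V 0 1) + ((b 2 : ℝ) : ℂ) * V 0 2 * conj (V 0 2)) := by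
    simp [Matrix.sub_apply, Matrix.mul_apply, Matrix.mul_diagonal, Matrix.diagonal_mul,
      Fin.sum_univ_three, Matrix.conjTranspose_apply, Complex.star_def]
    ring
  have e01 : (Matrix.diagonal (fun i => (a i : ℂ)) * V * Matrix.diagonal (fun i => (b i : ℂ)) * Vᴴ
        - V * Matrix.diagonal (fun i => (b i : ℂ)) * Vᴴ
            * Matrix.diagonal (fun i => (a i : ℂ))) 0 1 = (((a 0 : ℝ) : ℂ) - ((a 1 : ℝ) : ℂ)) * (((b 0 : ℝ) : ℂ) * V 0 0 * conj (V 1 0) + ((b 1 : ℝ) : ℂ) * V 0 1 * conj (V 1 1) + ((b 2 : ℝ) : ℂ) * V 0 2 * conj (V 1 2)) := by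
    simp [Matrix.sub_apply, Matrix.mul_apply, Matrix.mul_diagonal, Matrix.diagonal_mul,
      Fin.sum_univ_three, Matrix.conjTranspose_apply, Complex.star_def]
    ring
  have e02 : (Matrix.diagonal (fun i => (a i : ℂ)) * V * Matrix.diagonal (fun i => (b i : ℂ)) * Vᴴ
        - V * Matrix.diagonal (fun i => (b i : ℂ)) * Vᴴ
            * Matrix.diagonal (fun i => (a i : ℂ))) 0 2 = (((a 0 : ℝ) : ℂ) - ((a 2 : ℝ) : ℂ)) * (((b 0 : ℝ) : ℂ) * V 0 0 * conj (V 2 0) + ((b 1 : ℝ) : ℂ) * V 0 1 * conj (V 2 1) + ((b 2 : ℝ) : ℂ) * V 0 2 * conj (V 2 2)) := by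
    simp [Matrix.sub_apply, Matrix.mul_apply, Matrix.mul_diagonal, Matrix.diagonal_mul,
      Fin.sum_univ_three, Matrix.conjTranspose_apply, Complex.star_def]
    ring
  have e10 : (Matrix.diagonal (fun i => (a i : ℂ)) * V * Matrix.diagonal (fun i => (b i : ℂ)) * Vᴴ
        - V * Matrix.diagonal (fun i => (b i : ℂ)) * Vᴴ
            * Matrix.diagonal (fun i => (a i : ℂ))) 1 0 = (((a 1 : ℝ) : ℂ) - ((a 0 : ℝ) : ℂ)) * (((b 0 : ℝ) : ℂ) * V 1 0 * conj (V 0 0) + ((b 1 : ℝ) : ℂ) * V 1 1 * conj (V 0 1) + ((b 2 : ℝ) : ℂ) * V 1 2 * conj (V 0 2)) := by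
    simp [Matrix.sub_apply, Matrix.mul_apply, Matrix.mul_diagonal, Matrix.diagonal_mul,
      Fin.sum_univ_three, Matrix.conjTranspose_apply, Complex.star_def]
    ring
  have e11 : (Matrix.diagonal (fun i => (a i : ℂ)) * V * Matrix.diagonal (fun i => (b i : ℂ)) * Vᴴ
        - V * Matrix.diagonal (fun i => (b i : ℂ)) * Vᴴ
            * Matrix.diagonal (fun i => (a i : ℂ))) 1 1 = (((a 1 : ℝ) : ℂ) - ((a 1 : ℝ) : ℂ)) * (((b 0 : ℝ) : ℂ) * V 1 0 * conj (V 1 0) + ((b 1 : ℝ) : ℂ) * V 1 1 * conj (V 1 1) + ((b 2 : ℝ) : ℂ) * V 1 2 * conj (V 1 2)) := by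
    simp [Matrix.sub_apply, Matrix.mul_apply, Matrix.mul_diagonal, Matrix.diagonal_mul,
      Fin.sum_univ_three, Matrix.conjTranspose_apply, Complex.star_def]
    ring
  have e12 : (Matrix.diagonal (fun i => (a i : ℂ)) * V * Matrix.diagonal (fun i => (b i : ℂ)) * Vᴴ
        - V * Matrix.diagonal (fun i => (b i : ℂ)) * Vᴴ
            * Matrix.diagonal (fun i => (a i : ℂ))) 1 2 = (((a 1 : ℝ) : ℂ) - ((a 2 : ℝ) : ℂ)) * (((b 0 : ℝ) : ℂ) * V 1 0 * conj (V 2 0) + ((b 1 : ℝ) : ℂ) * V 1 1 * conj (V 2 1) + ((b 2 : ℝ) : ℂ) * V 1 2 * conj (V 2 2)) := by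
    simp [Matrix.sub_apply, Matrix.mul_apply, Matrix.mul_diagonal, Matrix.diagonal_mul,
      Fin.sum_univ_three, Matrix.conjTranspose_apply, Complex.star_def]
    ring
  have e20 : (Matrix.diagonal (fun i => (a i : ℂ)) * V * Matrix.diagonal (fun i => (b i : ℂ)) * Vᴴ
        - V * Matrix.diagonal (fun i => (b i : ℂ)) * Vᴴ
            * Matrix.diagonal (fun i => (a i : ℂ))) 2 0 = (((a 2 : ℝ) : ℂ) - ((a 0 : ℝ) : ℂ)) * (((b 0 : ℝ) : ℂ) * V 2 0 * conj (V 0 0) + ((b 1 : ℝ) : ℂ) * V 2 1 * conj (V 0 1) + ((b 2 : ℝ) : ℂ) * V 2 2 * conj (V 0 2)) := by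
    simp [Matrix.sub_apply, Matrix.mul_apply, Matrix.mul_diagonal, Matrix.diagonal_mul,
      Fin.sum_univ_three, Matrix.conjTranspose_apply, Complex.star_def]
    ring
  have e21 : (Matrix.diagonal (fun i => (a i : ℂ)) * V * Matrix.diagonal (fun i => (b i : ℂ)) * Vᴴ
        - V * Matrix.diagonal (fun i => (b i : ℂ)) * Vᴴ
            * Matrix.diagonal (fun i => (a i : ℂ))) 2 1 = (((a 2 : ℝ) : ℂ) - ((a 1 : ℝ) : ℂ)) * (((b 0 : ℝ) : ℂ) * V 2 0 * conj (V 1 0) + ((b 1 : ℝ) : ℂ) * V 2 1 * conj (V 1 1) + ((b 2 : ℝ) : ℂ) * V 2 2 * conj (V 1 2)) := by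
    simp [Matrix.sub_apply, Matrix.mul_apply, Matrix.mul_diagonal, Matrix.diagonal_mul,
      Fin.sum_univ_three, Matrix.conjTranspose_apply, Complex.star_def]
    ring
  have e22 : (Matrix.diagonal (fun i => (a i : ℂ)) * V * Matrix.diagonal (fun i => (b i : ℂ)) * Vᴴ
        - V * Matrix.diagonal (fun i => (b i : ℂ)) * Vᴴ
            * Matrix.diagonal (fun i => (a i : ℂ))) 2 2 = (((a 2 : ℝ) : ℂ) - ((a 2 : ℝ) : ℂ)) * (((b 0 : ℝ) : ℂ) * V 2 0 * conj (V 2 0) + ((b 1 : ℝ) : ℂ) * V 2 1 * conj (V 2 1) + ((b 2 : ℝ) : ℂ) * V 2 2 * conj (V 2 2)) := by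
    simp [Matrix.sub_apply, Matrix.mul_apply, Matrix.mul_diagonal, Matrix.diagonal_mul,
      Fin.sum_univ_three, Matrix.conjTranspose_apply, Complex.star_def]
    ring
  rw [Matrix.det_fin_three, e00, e01, e02, e10, e11, e12, e20, e21, e22, hA]
  push_cast
  linear_combination -((((a 0 : ℝ) : ℂ) - ((a 1 : ℝ) : ℂ)) * (((a 1 : ℝ) : ℂ) - ((a 2 : ℝ) : ℂ))
      * (((a 2 : ℝ) : ℂ) - ((a 0 : ℝ) : ℂ)) * ((((b 0 : ℝ) : ℂ) - ((b 1 : ℝ) : ℂ))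
      * (((b 1 : ℝ) : ℂ) - ((b 2 : ℝ) : ℂ)) * (((b 2 : ℝ) : ℂ) - ((b 0 : ℝ) : ℂ)))) * hJ
end

section
/- (Jarlskog's determinant for n = 4.) Let a_1,...,a_4 and b_1,...,b_4 be real numbers, let D = diag(a_1,...,a_4) and D' = diag(b_1,...,b_4), and let V be a 4×4 unitary matrix. Define T_{(ij)(kl)} = (a_i−a_j)²(a_k−a_l)², T_{(ijkl)} = (a_i−a_j)(a_j−a_k)(a_k−a_l)(a_l−a_i), b_{k4} = b_k − b_4, the complex products [αβ;jk] = V_{αj} V_{βk} conj(V_{αk}) conj(V_{βj}) and (abc;k_1k_2k_3) = V_{a k_1} conj(V_{b k_1}) V_{b k_2} conj(V_{c k_2}) V_{c k_3} conj(V_{a k_3}). Then det(D V D' V† − V D' V† D) = Re[ T_{(12)(34)} Σ_{k_1,k_2,k_3=1}^{3} b_{k_1 4} b_{k_2 4} b_{k_3 4}² [12;k_1 k_2] |V_{3 k_3}|² + T_{(13)(24)} Σ_{k_1,k_2,k_3=1}^{3} b_{k_1 4} b_{k_2 4} b_{k_3 4}² [13;k_1 k_2] |V_{2 k_3}|² +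 T_{(14)(23)} Σ_{k_1,k_2,k_3=1}^{3} b_{k_1 4} b_{k_2 4} b_{k_3 4}² [23;k_1 k_2] |V_{1 k_3}|² − 2( T_{(1243)} Σ_{k_1,k_2,k_3=1}^{3} b_{k_1 4} b_{k_2 4} b_{k_3 4}² (312;k_1k_2k_3) + T_{(1324)} Σ_{k_1,k_2,k_3=1}^{3} b_{k_1 4} b_{k_2 4} b_{k_3 4}² (132;k_1k_2k_3) + T_{(1234)} Σ_{k_1,k_2,k_3=1}^{3} b_{k_1 4} b_{k_2 4} b_{k_3 4}² (123;k_1k_2k_3) ) − { T_{(12)(34)} Σ_{k_1,...,k_4=1}^{3} b_{k_1 4} b_{k_2 4} b_{k_3 4} b_{k_4 4} ( [13;k_1 k_2][23;k_3 k_4] + [12;k_1 k_2] |V_{3 k_3}|² |V_{3 k_4}|² ) + T_{(13)(24)} Σ_{k_1,...,k_4=1}^{3} b_{k_1 4} b_{k_2 4} b_{k_3 4} b_{k_4 4} ( [12;k_1 k_2][23;k_3 k_4] + [13;k_1 k_2] |V_{2 k_3}|² |V_{2 k_4}|² ) + T_{(14)(23)} Σ_{k_1,...,k_4=1}^{3}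 b_{k_1 4} b_{k_2 4} b_{k_3 4} b_{k_4 4} ( [12;k_1 k_2][13;k_3 k_4] + [23;k_1 k_2] |V_{1 k_3}|² |V_{1 k_4}|² ) − 2( T_{(1243)} Σ_{k_1,...,k_4=1}^{3} b_{k_1 4} b_{k_2 4} b_{k_3 4} b_{k_4 4} (312;k_1k_2k_3)(|V_{2 k_4}|² + |V_{3 k_4}|²) + T_{(1324)} Σ_{k_1,...,k_4=1}^{3} b_{k_1 4} b_{k_2 4} b_{k_3 4} b_{k_4 4} (132;k_1k_2k_3)(|V_{1 k_4}|² + |V_{2 k_4}|²) + T_{(1234)} Σ_{k_1,...,k_4=1}^{3} b_{k_1 4} b_{k_2 4} b_{k_3 4} b_{k_4 4} (123;k_1k_2k_3)(|V_{1 k_4}|² + |V_{3 k_4}|²) ) } ]. -/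
open Matrix ComplexConjugate

/-- T_{(ij)(kl)} = (a_i − a_j)²(a_k − a_l)². -/
noncomputable def Tsq (a : Fin 4 → ℝ) (i j k l : Fin 4) : ℝ :=
  (a i - a j) ^ 2 * (a k - a l) ^ 2

/-- T_{(ijkl)} = (a_i − a_j)(a_j − a_k)(a_k − a_l)(a_l − a_i). -/
noncomputable def Tcyc (a : Fin 4 → ℝ) (i j k l : Fin 4) : ℝ :=
  (a i - a j) * (a j - a k) * (a k - a l) * (a l - a i)

/-- b_{k4} = b_k − b_4, for k ∈ {1,2,3} (0-based: k ∈ Fin 3, 4 ↦ 3). -/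
noncomputable def bk4 (b : Fin 4 → ℝ) (k : Fin 3) : ℝ := b k.castSucc - b 3

/-- [αβ;jk] = V_{αj} V_{βk} conj(V_{αk}) conj(V_{βj}) with j,k ∈ {1,2,3}. -/
noncomputable def sqBr (V : Matrix (Fin 4) (Fin 4) ℂ) (α β : Fin 4) (j k : Fin 3) : ℂ :=
  V α j.castSucc * V β k.castSucc * conj (V α k.castSucc) * conj (V β j.castSucc)

/-- (pqr; k₁k₂k₃) = V_{p k₁} conj(V_{q k₁}) V_{q k₂} conj(V_{r k₂}) V_{r k₃} conj(V_{p k₃}). -/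
noncomputable def tri (V : Matrix (Fin 4) (Fin 4) ℂ) (p q r : Fin 4) (k₁ k₂ k₃ : Fin 3) : ℂ :=
  V p k₁.castSucc * conj (V q k₁.castSucc) * V q k₂.castSucc * conj (V r k₂.castSucc)
    * V r k₃.castSucc * conj (V p k₃.castSucc)

set_option maxHeartbeats 4000000

theorem cs0 : (0 : Fin 3).castSucc = (0 : Fin 4) := rfl
theorem cs1 : (1 : Fin 3).castSucc = (1 : Fin 4) := rfl
theorem cs2 : (2 : Fin 3).castSucc = (2 : Fin 4) := rfl

theorem det_four (M : Matrix (Fin 4) (Fin 4) ℂ) :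
    M.det =
      M 0 0 * (M 1 1 * (M 2 2 * M 3 3 - M 2 3 * M 3 2)
        - M 1 2 * (M 2 1 * M 3 3 - M 2 3 * M 3 1)
        + M 1 3 * (M 2 1 * M 3 2 - M 2 2 * M 3 1))
      - M 0 1 * (M 1 0 * (M 2 2 * M 3 3 - M 2 3 * M 3 2)
        - M 1 2 * (M 2 0 * M 3 3 - M 2 3 * M 3 0)
        + M 1 3 * (M 2 0 * M 3 2 - M 2 2 * M 3 0))
      + M 0 2 * (M 1 0 * (M 2 1 * M 3 3 - M 2 3 * M 3 1)
        - M 1 1 * (M 2 0 * M 3 3 - M 2 3 * M 3 0)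
        + M 1 3 * (M 2 0 * M 3 1 - M 2 1 * M 3 0))
      - M 0 3 * (M 1 0 * (M 2 1 * M 3 2 - M 2 2 * M 3 1)
        - M 1 1 * (M 2 0 * M 3 2 - M 2 2 * M 3 0)
        + M 1 2 * (M 2 0 * M 3 1 - M 2 1 * M 3 0)) := by
  rw [Matrix.det_succ_row_zero]
  simp [Fin.sum_univ_succ, Matrix.det_fin_three, Matrix.submatrix_apply, Fin.succAbove,
    show (Fin.succ 2 : Fin 4) = 3 from rfl, show (Fin.succ 1 : Fin 4) = 2 from rfl,
    show (Fin.succ 0 : Fin 4) = 1 from rfl,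
    show ((2 : Fin 3).castSucc : Fin 4) = 2 from rfl,
    show ((1 : Fin 3).castSucc : Fin 4) = 1 from rfl,
    show ((0 : Fin 3).castSucc : Fin 4) = 0 from rfl,
    show ((1 : Fin 4) < 3) = True from eq_true (by decide),
    show ((1 : Fin 4) < 2) = True from eq_true (by decide)]
  ring

noncomputable def Wm (b : Fin 4 → ℝ) (V : Matrix (Fin 4) (Fin 4) ℂ) (α β : Fin 4) : ℂ :=
  ∑ k : Fin 3, ((b k.castSucc - b 3 : ℝ) : ℂ) * V α k.castSucc * conj (V β k.castSucc)

noncomputable def Um (b : Fin 4 → ℝ) (V : Matrix (Fin 4) (Fin 4) ℂ) (α β : Fin 4) : ℂ :=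
  ∑ k : Fin 3, ((b k.castSucc - b 3 : ℝ) : ℂ) ^ 2 * V α k.castSucc * conj (V β k.castSucc)

/-- Jarlskog's determinant for n = 4 (paper's index i is `i-1` here). -/
theorem jarlskog_det_four (a b : Fin 4 → ℝ) (V : Matrix (Fin 4) (Fin 4) ℂ)
    (hV : V ∈ Matrix.unitaryGroup (Fin 4) ℂ) :
    (Matrix.diagonal (fun i => (a i : ℂ)) * V * Matrix.diagonal (fun i => (b i : ℂ)) * Vᴴ
        - V * Matrix.diagonal (fun i => (b i : ℂ)) * Vᴴ
            * Matrix.diagonal (fun i => (a i : ℂ))).det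
      = ((
          ((Tsq a 0 1 2 3 : ℝ) : ℂ)
            * ∑ k₁ : Fin 3, ∑ k₂ : Fin 3, ∑ k₃ : Fin 3,
                ((bk4 b k₁ : ℝ) : ℂ) * ((bk4 b k₂ : ℝ) : ℂ) * ((bk4 b k₃ : ℝ) : ℂ) ^ 2
                  * sqBr V 0 1 k₁ k₂ * ((Complex.normSq (V 2 k₃.castSucc) : ℝ) : ℂ)
          + ((Tsq a 0 2 1 3 : ℝ) : ℂ)
            * ∑ k₁ : Fin 3, ∑ k₂ : Fin 3, ∑ k₃ : Fin 3,
                ((bk4 b k₁ : ℝ) : ℂ) * ((bk4 b k₂ : ℝ) : ℂ) * ((bk4 b k₃ : ℝ) : ℂ) ^ 2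
                  * sqBr V 0 2 k₁ k₂ * ((Complex.normSq (V 1 k₃.castSucc) : ℝ) : ℂ)
          + ((Tsq a 0 3 1 2 : ℝ) : ℂ)
            * ∑ k₁ : Fin 3, ∑ k₂ : Fin 3, ∑ k₃ : Fin 3,
                ((bk4 b k₁ : ℝ) : ℂ) * ((bk4 b k₂ : ℝ) : ℂ) * ((bk4 b k₃ : ℝ) : ℂ) ^ 2
                  * sqBr V 1 2 k₁ k₂ * ((Complex.normSq (V 0 k₃.castSucc) : ℝ) : ℂ)
          - 2 * (
              ((Tcyc a 0 1 3 2 : ℝ) : ℂ)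
                * ∑ k₁ : Fin 3, ∑ k₂ : Fin 3, ∑ k₃ : Fin 3,
                    ((bk4 b k₁ : ℝ) : ℂ) * ((bk4 b k₂ : ℝ) : ℂ) * ((bk4 b k₃ : ℝ) : ℂ) ^ 2
                      * tri V 2 0 1 k₁ k₂ k₃
              + ((Tcyc a 0 2 1 3 : ℝ) : ℂ)
                * ∑ k₁ : Fin 3, ∑ k₂ : Fin 3, ∑ k₃ : Fin 3,
                    ((bk4 b k₁ : ℝ) : ℂ) * ((bk4 b k₂ : ℝ) : ℂ) * ((bk4 b k₃ : ℝ) : ℂ) ^ 2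
                      * tri V 0 2 1 k₁ k₂ k₃
              + ((Tcyc a 0 1 2 3 : ℝ) : ℂ)
                * ∑ k₁ : Fin 3, ∑ k₂ : Fin 3, ∑ k₃ : Fin 3,
                    ((bk4 b k₁ : ℝ) : ℂ) * ((bk4 b k₂ : ℝ) : ℂ) * ((bk4 b k₃ : ℝ) : ℂ) ^ 2
                      * tri V 0 1 2 k₁ k₂ k₃)
          - (
              ((Tsq a 0 1 2 3 : ℝ) : ℂ)
                * ∑ k₁ : Fin 3, ∑ k₂ : Fin 3, ∑ k₃ : Fin 3, ∑ k₄ : Fin 3,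
                    ((bk4 b k₁ : ℝ) : ℂ) * ((bk4 b k₂ : ℝ) : ℂ) * ((bk4 b k₃ : ℝ) : ℂ)
                      * ((bk4 b k₄ : ℝ) : ℂ)
                      * (sqBr V 0 2 k₁ k₂ * sqBr V 1 2 k₃ k₄
                          + sqBr V 0 1 k₁ k₂ * ((Complex.normSq (V 2 k₃.castSucc) : ℝ) : ℂ)
                              * ((Complex.normSq (V 2 k₄.castSucc) : ℝ) : ℂ))
              + ((Tsq a 0 2 1 3 : ℝ) : ℂ)
                * ∑ k₁ : Fin 3, ∑ k₂ : Fin 3, ∑ k₃ : Fin 3, ∑ k₄ : Fin 3,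
                    ((bk4 b k₁ : ℝ) : ℂ) * ((bk4 b k₂ : ℝ) : ℂ) * ((bk4 b k₃ : ℝ) : ℂ)
                      * ((bk4 b k₄ : ℝ) : ℂ)
                      * (sqBr V 0 1 k₁ k₂ * sqBr V 1 2 k₃ k₄
                          + sqBr V 0 2 k₁ k₂ * ((Complex.normSq (V 1 k₃.castSucc) : ℝ) : ℂ)
                              * ((Complex.normSq (V 1 k₄.castSucc) : ℝ) : ℂ))
              + ((Tsq a 0 3 1 2 : ℝ) : ℂ)
                * ∑ k₁ : Fin 3, ∑ k₂ : Fin 3, ∑ k₃ : Fin 3, ∑ k₄ : Fin 3,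
                    ((bk4 b k₁ : ℝ) : ℂ) * ((bk4 b k₂ : ℝ) : ℂ) * ((bk4 b k₃ : ℝ) : ℂ)
                      * ((bk4 b k₄ : ℝ) : ℂ)
                      * (sqBr V 0 1 k₁ k₂ * sqBr V 0 2 k₃ k₄
                          + sqBr V 1 2 k₁ k₂ * ((Complex.normSq (V 0 k₃.castSucc) : ℝ) : ℂ)
                              * ((Complex.normSq (V 0 k₄.castSucc) : ℝ) : ℂ))
              - 2 * (
                  ((Tcyc a 0 1 3 2 : ℝ) : ℂ)
                    * ∑ k₁ : Fin 3, ∑ k₂ : Fin 3, ∑ k₃ : Fin 3, ∑ k₄ : Fin 3,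
                        ((bk4 b k₁ : ℝ) : ℂ) * ((bk4 b k₂ : ℝ) : ℂ) * ((bk4 b k₃ : ℝ) : ℂ)
                          * ((bk4 b k₄ : ℝ) : ℂ)
                          * tri V 2 0 1 k₁ k₂ k₃
                          * (((Complex.normSq (V 1 k₄.castSucc) : ℝ) : ℂ)
                              + ((Complex.normSq (V 2 k₄.castSucc) : ℝ) : ℂ))
                  + ((Tcyc a 0 2 1 3 : ℝ) : ℂ)
                    * ∑ k₁ : Fin 3, ∑ k₂ : Fin 3, ∑ k₃ : Fin 3, ∑ k₄ : Fin 3,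
                        ((bk4 b k₁ : ℝ) : ℂ) * ((bk4 b k₂ : ℝ) : ℂ) * ((bk4 b k₃ : ℝ) : ℂ)
                          * ((bk4 b k₄ : ℝ) : ℂ)
                          * tri V 0 2 1 k₁ k₂ k₃
                          * (((Complex.normSq (V 0 k₄.castSucc) : ℝ) : ℂ)
                              + ((Complex.normSq (V 1 k₄.castSucc) : ℝ) : ℂ))
                  + ((Tcyc a 0 1 2 3 : ℝ) : ℂ)
                    * ∑ k₁ : Fin 3, ∑ k₂ : Fin 3, ∑ k₃ : Fin 3, ∑ k₄ : Fin 3,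
                        ((bk4 b k₁ : ℝ) : ℂ) * ((bk4 b k₂ : ℝ) : ℂ) * ((bk4 b k₃ : ℝ) : ℂ)
                          * ((bk4 b k₄ : ℝ) : ℂ)
                          * tri V 0 1 2 k₁ k₂ k₃
                          * (((Complex.normSq (V 0 k₄.castSucc) : ℝ) : ℂ)
                              + ((Complex.normSq (V 2 k₄.castSucc) : ℝ) : ℂ))))
          ).re : ℂ) := by
  have hV1 : V * Vᴴ = 1 := (Matrix.mem_unitaryGroup_iff.mp hV)
  have hV2 : Vᴴ * V = 1 := (Matrix.mem_unitaryGroup_iff'.mp hV)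
  have hrow : ∀ α β : Fin 4, α ≠ β →
      V α 0 * conj (V β 0) + V α 1 * conj (V β 1) + V α 2 * conj (V β 2)
        + V α 3 * conj (V β 3) = 0 := by
    intro α β hab
    have h := congrFun (congrFun hV1 α) β
    simpa [Matrix.mul_apply, Fin.sum_univ_four, Matrix.one_apply, hab] using h
  have hcol : ∀ k k' : Fin 4,
      conj (V 0 k) * V 0 k' + conj (V 1 k) * V 1 k' + conj (V 2 k) * V 2 k'
        + conj (V 3 k) * V 3 k' = if k = k' then 1 else 0 := by
    intro k k'
    have h := congrFun (congrFun hV2 k) k'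
    simpa [Matrix.mul_apply, Fin.sum_univ_four, Matrix.one_apply, Matrix.conjTranspose_apply,
      mul_comm] using h
  have e1 : ∀ α β : Fin 4,
      (Matrix.diagonal (fun i => (a i : ℂ)) * V * Matrix.diagonal (fun i => (b i : ℂ)) * Vᴴ) α β
        = ∑ k : Fin 4, (a α : ℂ) * V α k * (b k : ℂ) * conj (V β k) := by
    intro α β
    rw [Matrix.mul_apply]
    refine Finset.sum_congr rfl fun k _ => ?_
    rw [Matrix.mul_diagonal, Matrix.diagonal_mul, Matrix.conjTranspose_apply,
      ← starRingEnd_apply]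
  have e2 : ∀ α β : Fin 4,
      (V * Matrix.diagonal (fun i => (b i : ℂ)) * Vᴴ * Matrix.diagonal (fun i => (a i : ℂ))) α β
        = ∑ k : Fin 4, V α k * (b k : ℂ) * conj (V β k) * (a β : ℂ) := by
    intro α β
    rw [Matrix.mul_diagonal, Matrix.mul_apply, Finset.sum_mul]
    refine Finset.sum_congr rfl fun k _ => ?_
    rw [Matrix.mul_diagonal, Matrix.conjTranspose_apply, ← starRingEnd_apply]
  have hM : (Matrix.diagonal (fun i => (a i : ℂ)) * V * Matrix.diagonal (fun i => (b i : ℂ)) * Vᴴ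
        - V * Matrix.diagonal (fun i => (b i : ℂ)) * Vᴴ
            * Matrix.diagonal (fun i => (a i : ℂ)))
      = Matrix.of (fun α β : Fin 4 => ((a α : ℂ) - (a β : ℂ)) * Wm b V α β) := by
    ext α β
    rw [Matrix.sub_apply, e1, e2, Matrix.of_apply]
    simp only [Wm, Fin.sum_univ_four, Fin.sum_univ_three, cs0, cs1, cs2]
    by_cases h : α = β
    · subst h; push_cast; ring
    · have hr := hrow α β h
      push_cast
      linear_combination ((a α : ℂ) - (a β : ℂ)) * ((b 3 : ℝ) : ℂ) * hr
  have h00 := hcol 0 0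
  have h11 := hcol 1 1
  have h22 := hcol 2 2
  rw [if_pos rfl] at h00 h11 h22
  have h01 := hcol 0 1
  have h02 := hcol 0 2
  have h10 := hcol 1 0
  have h12 := hcol 1 2
  have h20 := hcol 2 0
  have h21 := hcol 2 1
  rw [if_neg (by decide)] at h01 h02 h10 h12 h20 h21
  have hW3 : ∀ α β : Fin 4, Wm b V α 3 * Wm b V 3 β
      = Um b V α β - (Wm b V α 0 * Wm b V 0 β + Wm b V α 1 * Wm b V 1 β
          + Wm b V α 2 * Wm b V 2 β) := by
    intro α β
    simp only [Wm, Um, Fin.sum_univ_three, cs0, cs1, cs2]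
    push_cast
    linear_combination
        ((b 0 : ℂ) - (b 3 : ℂ)) * ((b 0 : ℂ) - (b 3 : ℂ)) * V α 0 * conj (V β 0) * h00
      + ((b 0 : ℂ) - (b 3 : ℂ)) * ((b 1 : ℂ) - (b 3 : ℂ)) * V α 0 * conj (V β 1) * h01
      + ((b 0 : ℂ) - (b 3 : ℂ)) * ((b 2 : ℂ) - (b 3 : ℂ)) * V α 0 * conj (V β 2) * h02
      + ((b 1 : ℂ) - (b 3 : ℂ)) * ((b 0 : ℂ) - (b 3 : ℂ)) * V α 1 * conj (V β 0) * h10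
      + ((b 1 : ℂ) - (b 3 : ℂ)) * ((b 1 : ℂ) - (b 3 : ℂ)) * V α 1 * conj (V β 1) * h11
      + ((b 1 : ℂ) - (b 3 : ℂ)) * ((b 2 : ℂ) - (b 3 : ℂ)) * V α 1 * conj (V β 2) * h12
      + ((b 2 : ℂ) - (b 3 : ℂ)) * ((b 0 : ℂ) - (b 3 : ℂ)) * V α 2 * conj (V β 0) * h20
      + ((b 2 : ℂ) - (b 3 : ℂ)) * ((b 1 : ℂ) - (b 3 : ℂ)) * V α 2 * conj (V β 1) * h21
      + ((b 2 : ℂ) - (b 3 : ℂ)) * ((b 2 : ℂ) - (b 3 : ℂ)) * V α 2 * conj (V β 2) * h22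
  have hWc : ∀ α β : Fin 4, conj (Wm b V α β) = Wm b V β α := by
    intro α β
    simp only [Wm, Fin.sum_univ_three, map_add, _root_.map_mul, Complex.conj_conj,
      Complex.conj_ofReal]
    ring
  have hUc : ∀ α β : Fin 4, conj (Um b V α β) = Um b V β α := by
    intro α β
    simp only [Um, Fin.sum_univ_three, map_add, _root_.map_mul, map_pow, Complex.conj_conj,
      Complex.conj_ofReal]
    ring
  have hz : ∀ w : ℂ, ((w.re : ℝ) : ℂ) = (w + conj w) / 2 := by
    intro w
    rw [Complex.add_conj]
    push_cast
    ring
  have hT3sq : ∀ α β γ : Fin 4,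
      (∑ k₁ : Fin 3, ∑ k₂ : Fin 3, ∑ k₃ : Fin 3,
          ((bk4 b k₁ : ℝ) : ℂ) * ((bk4 b k₂ : ℝ) : ℂ) * ((bk4 b k₃ : ℝ) : ℂ) ^ 2
            * sqBr V α β k₁ k₂ * ((Complex.normSq (V γ k₃.castSucc) : ℝ) : ℂ))
        = Wm b V α β * Wm b V β α * Um b V γ γ := by
    intro α β γ
    simp only [Wm, Um, sqBr, bk4, Fin.sum_univ_three, cs0, cs1, cs2, ← Complex.mul_conj]
    push_cast
    ring
  have hT3tri : ∀ p q r : Fin 4,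
      (∑ k₁ : Fin 3, ∑ k₂ : Fin 3, ∑ k₃ : Fin 3,
          ((bk4 b k₁ : ℝ) : ℂ) * ((bk4 b k₂ : ℝ) : ℂ) * ((bk4 b k₃ : ℝ) : ℂ) ^ 2
            * tri V p q r k₁ k₂ k₃)
        = Wm b V p q * Wm b V q r * Um b V r p := by
    intro p q r
    simp only [Wm, Um, tri, bk4, Fin.sum_univ_three, cs0, cs1, cs2]
    push_cast
    ring
  have hT4a : ∀ α₁ β₁ α₂ β₂ α₃ β₃ γ : Fin 4,
      (∑ k₁ : Fin 3, ∑ k₂ : Fin 3, ∑ k₃ : Fin 3, ∑ k₄ : Fin 3,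
          ((bk4 b k₁ : ℝ) : ℂ) * ((bk4 b k₂ : ℝ) : ℂ) * ((bk4 b k₃ : ℝ) : ℂ)
            * ((bk4 b k₄ : ℝ) : ℂ)
            * (sqBr V α₁ β₁ k₁ k₂ * sqBr V α₂ β₂ k₃ k₄
                + sqBr V α₃ β₃ k₁ k₂ * ((Complex.normSq (V γ k₃.castSucc) : ℝ) : ℂ)
                    * ((Complex.normSq (V γ k₄.castSucc) : ℝ) : ℂ)))
        = Wm b V α₁ β₁ * Wm b V β₁ α₁ * (Wm b V α₂ β₂ * Wm b V β₂ α₂)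
            + Wm b V α₃ β₃ * Wm b V β₃ α₃ * (Wm b V γ γ * Wm b V γ γ) := by
    intro α₁ β₁ α₂ β₂ α₃ β₃ γ
    simp only [Wm, sqBr, bk4, Fin.sum_univ_three, cs0, cs1, cs2, ← Complex.mul_conj]
    push_cast
    ring
  have hT4b : ∀ p q r x y : Fin 4,
      (∑ k₁ : Fin 3, ∑ k₂ : Fin 3, ∑ k₃ : Fin 3, ∑ k₄ : Fin 3,
          ((bk4 b k₁ : ℝ) : ℂ) * ((bk4 b k₂ : ℝ) : ℂ) * ((bk4 b k₃ : ℝ) : ℂ)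
            * ((bk4 b k₄ : ℝ) : ℂ)
            * tri V p q r k₁ k₂ k₃
            * (((Complex.normSq (V x k₄.castSucc) : ℝ) : ℂ)
                + ((Complex.normSq (V y k₄.castSucc) : ℝ) : ℂ)))
        = Wm b V p q * Wm b V q r * Wm b V r p * (Wm b V x x + Wm b V y y) := by
    intro p q r x y
    simp only [Wm, tri, bk4, Fin.sum_univ_three, cs0, cs1, cs2, ← Complex.mul_conj]
    push_cast
    ring
  rw [hM, det_four]
  simp only [Matrix.of_apply]
  rw [hz, eq_div_iff (by norm_num : (2 : ℂ) ≠ 0)]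
  rw [hT3sq 0 1 2, hT3sq 0 2 1, hT3sq 1 2 0, hT3tri 2 0 1, hT3tri 0 2 1, hT3tri 0 1 2,
    hT4a 0 2 1 2 0 1 2, hT4a 0 1 1 2 0 2 1, hT4a 0 1 0 2 1 2 0,
    hT4b 2 0 1 1 2, hT4b 0 2 1 0 1, hT4b 0 1 2 0 2]
  simp only [map_add, map_sub, _root_.map_mul, map_pow, map_ofNat, Complex.conj_ofReal, hWc, hUc,
    Tsq, Tcyc]
  push_cast
  have g00 := hW3 0 0
  have g01 := hW3 0 1
  have g02 := hW3 0 2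
  have g10 := hW3 1 0
  have g11 := hW3 1 1
  have g12 := hW3 1 2
  have g20 := hW3 2 0
  have g21 := hW3 2 1
  have g22 := hW3 2 2
  linear_combination
      2 * (((a 0 : ℂ) - (a 1 : ℂ)) ^ 2 * ((a 2 : ℂ) - (a 3 : ℂ)) ^ 2)
        * Wm b V 0 1 * Wm b V 1 0 * g22
    + 2 * (((a 0 : ℂ) - (a 2 : ℂ)) ^ 2 * ((a 1 : ℂ) - (a 3 : ℂ)) ^ 2)
        * Wm b V 0 2 * Wm b V 2 0 * g11
    + 2 * (((a 0 : ℂ) - (a 3 : ℂ)) ^ 2 * ((a 1 : ℂ) - (a 2 : ℂ)) ^ 2)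
        * Wm b V 1 2 * Wm b V 2 1 * g00
    - 2 * (((a 0 : ℂ) - (a 1 : ℂ)) * ((a 1 : ℂ) - (a 2 : ℂ)) * ((a 2 : ℂ) - (a 3 : ℂ))
        * ((a 3 : ℂ) - (a 0 : ℂ))) * Wm b V 0 1 * Wm b V 1 2 * g20
    - 2 * (((a 0 : ℂ) - (a 1 : ℂ)) * ((a 1 : ℂ) - (a 2 : ℂ)) * ((a 2 : ℂ) - (a 3 : ℂ))
        * ((a 3 : ℂ) - (a 0 : ℂ))) * Wm b V 2 1 * Wm b V 1 0 * g02
    - 2 * (((a 0 : ℂ) - (a 1 : ℂ)) * ((a 1 : ℂ) - (a 3 : ℂ)) * ((a 3 : ℂ) - (a 2 : ℂ))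
        * ((a 2 : ℂ) - (a 0 : ℂ))) * Wm b V 0 1 * Wm b V 2 0 * g12
    - 2 * (((a 0 : ℂ) - (a 1 : ℂ)) * ((a 1 : ℂ) - (a 3 : ℂ)) * ((a 3 : ℂ) - (a 2 : ℂ))
        * ((a 2 : ℂ) - (a 0 : ℂ))) * Wm b V 0 2 * Wm b V 1 0 * g21
    - 2 * (((a 0 : ℂ) - (a 2 : ℂ)) * ((a 2 : ℂ) - (a 1 : ℂ)) * ((a 1 : ℂ) - (a 3 : ℂ))
        * ((a 3 : ℂ) - (a 0 : ℂ))) * Wm b V 0 2 * Wm b V 2 1 * g10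
    - 2 * (((a 0 : ℂ) - (a 2 : ℂ)) * ((a 2 : ℂ) - (a 1 : ℂ)) * ((a 1 : ℂ) - (a 3 : ℂ))
        * ((a 3 : ℂ) - (a 0 : ℂ))) * Wm b V 1 2 * Wm b V 2 0 * g01
end

section
/- Let V be a 3×3 unitary matrix and define (αβ;jk) := Im(V_{αj} V_{βk} conj(V_{αk}) conj(V_{βj})). Then every such phase with α < β and j < k equals ±(12;12); explicitly: (12;13) = −(12;12), (12;23) = (12;12), (13;12) = −(12;12), (13;13) = (12;12), (13;23) = −(12;12), (23;12) = (12;12), (23;13) = −(12;12), and (23;23) = (12;12). -/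
open Matrix ComplexConjugate

/-- If `a0 + a1 + a2 = 0`, then `Im (a0 * conj a2) = -Im (a0 * conj a1)` and
    `Im (a1 * conj a2) = Im (a0 * conj a1)`. -/
lemma key3 (a0 a1 a2 : ℂ) (h : a0 + a1 + a2 = 0) :
    (a0 * conj a2).im = -(a0 * conj a1).im ∧ (a1 * conj a2).im = (a0 * conj a1).im := by
  have h2 : a2 = -a0 - a1 := by linear_combination h
  subst h2
  constructor <;>
    simp [Complex.mul_im, Complex.conj_re, Complex.conj_im] <;> ring

/-- Row version, shaped to match `phase3`. -/
lemma key3row (a0 a1 a2 b0 b1 b2 : ℂ)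
    (h : a0 * conj b0 + a1 * conj b1 + a2 * conj b2 = 0) :
    (a0 * b2 * conj a2 * conj b0).im = -(a0 * b1 * conj a1 * conj b0).im ∧
    (a1 * b2 * conj a2 * conj b1).im = (a0 * b1 * conj a1 * conj b0).im := by
  have H := key3 (a0 * conj b0) (a1 * conj b1) (a2 * conj b2) h
  have e1 : a0 * b2 * conj a2 * conj b0 = a0 * conj b0 * conj (a2 * conj b2) := by
    simp only [_root_.map_mul, Complex.conj_conj]; ring
  have e2 : a0 * b1 * conj a1 * conj b0 = a0 * conj b0 * conj (a1 * conj b1) := by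
    simp only [_root_.map_mul, Complex.conj_conj]; ring
  have e3 : a1 * b2 * conj a2 * conj b1 = a1 * conj b1 * conj (a2 * conj b2) := by
    simp only [_root_.map_mul, Complex.conj_conj]; ring
  rw [e1, e2, e3]
  exact H

/-- Column version, shaped to match `phase3`. -/
lemma key3col (u0 u1 u2 w0 w1 w2 : ℂ)
    (h : u0 * conj w0 + u1 * conj w1 + u2 * conj w2 = 0) :
    (u0 * w2 * conj w0 * conj u2).im = -(u0 * w1 * conj w0 * conj u1).im ∧
    (u1 * w2 * conj w1 * conj u2).im = (u0 * w1 * conj w0 * conj u1).im := by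
  have H := key3 (u0 * conj w0) (u1 * conj w1) (u2 * conj w2) h
  have e1 : u0 * w2 * conj w0 * conj u2 = u0 * conj w0 * conj (u2 * conj w2) := by
    simp only [_root_.map_mul, Complex.conj_conj]; ring
  have e2 : u0 * w1 * conj w0 * conj u1 = u0 * conj w0 * conj (u1 * conj w1) := by
    simp only [_root_.map_mul, Complex.conj_conj]; ring
  have e3 : u1 * w2 * conj w1 * conj u2 = u1 * conj w1 * conj (u2 * conj w2) := by
    simp only [_root_.map_mul, Complex.conj_conj]; ring
  rw [e1, e2, e3]
  exact H

/-- The invariant phase (αβ;jk) := Im(V_{αj} V_{βk} conj(V_{αk}) conj(V_{βj}))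
    of a 3×3 matrix V (indices here 0-based: paper's index i is `i-1`). -/
noncomputable def phase3 (V : Matrix (Fin 3) (Fin 3) ℂ) (α β j k : Fin 3) : ℝ :=
  (V α j * V β k * conj (V α k) * conj (V β j)).im

/-- For a 3×3 unitary matrix, every invariant phase with α < β and j < k
    equals ±(12;12). -/
theorem phase3_all_eq_pm (V : Matrix (Fin 3) (Fin 3) ℂ)
    (hV : V ∈ Matrix.unitaryGroup (Fin 3) ℂ) :
    phase3 V 0 1 0 2 = -phase3 V 0 1 0 1
    ∧ phase3 V 0 1 1 2 = phase3 V 0 1 0 1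
    ∧ phase3 V 0 2 0 1 = -phase3 V 0 1 0 1
    ∧ phase3 V 0 2 0 2 = phase3 V 0 1 0 1
    ∧ phase3 V 0 2 1 2 = -phase3 V 0 1 0 1
    ∧ phase3 V 1 2 0 1 = phase3 V 0 1 0 1
    ∧ phase3 V 1 2 0 2 = -phase3 V 0 1 0 1
    ∧ phase3 V 1 2 1 2 = phase3 V 0 1 0 1 := by
  have hrow : V * star V = 1 := (Matrix.mem_unitaryGroup_iff).mp hV
  have hcol : star V * V = 1 := (Matrix.mem_unitaryGroup_iff').mp hV
  -- row orthogonality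
  have hr : ∀ α β : Fin 3, α ≠ β →
      V α 0 * conj (V β 0) + V α 1 * conj (V β 1) + V α 2 * conj (V β 2) = 0 := by
    intro α β hne
    have := congrFun (congrFun hrow α) β
    simpa [Matrix.mul_apply, Fin.sum_univ_three, Matrix.one_apply, hne,
      Matrix.star_apply, RCLike.star_def, add_assoc] using this
  -- column orthogonality (columns 0 and 1)
  have hc : V 0 0 * conj (V 0 1) + V 1 0 * conj (V 1 1) + V 2 0 * conj (V 2 1) = 0 := by
    have := congrFun (congrFun hcol 1) 0
    have h2 : V 0 0 * conj (V 0 1) + (V 1 0 * conj (V 1 1) + V 2 0 * conj (V 2 1)) = 0 := by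
      simpa [Matrix.mul_apply, Fin.sum_univ_three, Matrix.one_apply,
        Matrix.star_apply, RCLike.star_def, add_assoc, mul_comm] using this
    linear_combination h2
  have H01 := key3row (V 0 0) (V 0 1) (V 0 2) (V 1 0) (V 1 1) (V 1 2) (hr 0 1 (by decide))
  have H02 := key3row (V 0 0) (V 0 1) (V 0 2) (V 2 0) (V 2 1) (V 2 2) (hr 0 2 (by decide))
  have H12 := key3row (V 1 0) (V 1 1) (V 1 2) (V 2 0) (V 2 1) (V 2 2) (hr 1 2 (by decide))
  have HC := key3col (V 0 0) (V 1 0) (V 2 0) (V 0 1) (V 1 1) (V 2 1) hc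
  simp only [phase3]
  refine ⟨H01.1, H01.2, HC.1, ?_, ?_, HC.2, ?_, ?_⟩
  · rw [H02.1, HC.1, neg_neg]
  · rw [H02.2, HC.1]
  · rw [H12.1, HC.2]
  · rw [H12.2, HC.2]
end

section
/- Let V be a 4×4 unitary matrix, define (αβ;jk) := Im(V_{αj} V_{βk} conj(V_{αk}) conj(V_{βj})) and J_{αj} := (α,α+1; j,j+1) for α, j ∈ {1,2,3}. Then (12;24) = J_{11} − J_{12}, (12;13) = −J_{12} + J_{13}, and (12;14) = −J_{11} + J_{12} − J_{13}. -/
open Matrix ComplexConjugate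

/-- The invariant phase (αβ;jk) := Im(V_{αj} V_{βk} conj(V_{αk}) conj(V_{βj}))
    of a 4×4 matrix V (indices here 0-based: paper's index i is `i-1`). -/
noncomputable def phase4 (V : Matrix (Fin 4) (Fin 4) ℂ) (α β j k : Fin 4) : ℝ :=
  (V α j * V β k * conj (V α k) * conj (V β j)).im

/-- J_{αj} := (α, α+1; j, j+1) for α, j ∈ {1,2,3} (0-based: α, j ∈ {0,1,2}). -/
noncomputable def Jinv (V : Matrix (Fin 4) (Fin 4) ℂ) (α j : Fin 3) : ℝ :=
  phase4 V α.castSucc α.succ j.castSucc j.succ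

/-- (12;24) = J₁₁ − J₁₂, (12;13) = −J₁₂ + J₁₃, (12;14) = −J₁₁ + J₁₂ − J₁₃. -/
theorem phase4_in_terms_of_J (V : Matrix (Fin 4) (Fin 4) ℂ)
    (hV : V ∈ Matrix.unitaryGroup (Fin 4) ℂ) :
    phase4 V 0 1 1 3 = Jinv V 0 0 - Jinv V 0 1
    ∧ phase4 V 0 1 0 2 = -Jinv V 0 1 + Jinv V 0 2
    ∧ phase4 V 0 1 0 3 = -Jinv V 0 0 + Jinv V 0 1 - Jinv V 0 2 := by
  have hVV : V * star V = 1 := hV.2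
  have h01 : (V * star V) 0 1 = (1 : Matrix (Fin 4) (Fin 4) ℂ) 0 1 := by rw [hVV]
  rw [Matrix.mul_apply, Fin.sum_univ_four] at h01
  simp [Matrix.one_apply, Matrix.star_apply] at h01
  set a := V 0 0 * conj (V 1 0) with ha
  set b := V 0 1 * conj (V 1 1) with hb
  set c := V 0 2 * conj (V 1 2) with hc
  set d := V 0 3 * conj (V 1 3) with hd
  have hsum : a + b + c + d = 0 := h01
  have hdval : d = -(a + b + c) := by linear_combination hsum
  have key : ∀ j k : Fin 4, phase4 V 0 1 j k =
      ((V 0 j * conj (V 1 j)) * conj (V 0 k * conj (V 1 k))).im := by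
    intro j k
    unfold phase4
    congr 1
    rw [_root_.map_mul, Complex.conj_conj]
    ring
  unfold Jinv phase4
  rw [show ((0 : Fin 3).castSucc : Fin 4) = 0 from rfl,
      show ((0 : Fin 3).succ : Fin 4) = 1 from rfl,
      show ((1 : Fin 3).castSucc : Fin 4) = 1 from rfl,
      show ((1 : Fin 3).succ : Fin 4) = 2 from rfl,
      show ((2 : Fin 3).castSucc : Fin 4) = 2 from rfl,
      show ((2 : Fin 3).succ : Fin 4) = 3 from rfl]
  have e1 := key 1 3
  have e2 := key 0 2
  have e3 := key 0 3
  have e4 := key 0 1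
  have e5 := key 1 2
  have e6 := key 2 3
  unfold phase4 at e1 e2 e3 e4 e5 e6
  rw [e1, e2, e3, e4, e5, e6, ← ha, ← hb, ← hc, ← hd, hdval]
  refine ⟨?_, ?_, ?_⟩ <;>
    simp only [Complex.mul_im, Complex.add_im, Complex.add_re, Complex.neg_im,
      Complex.neg_re, Complex.conj_re, Complex.conj_im, map_add, map_neg] <;>
    ring
end

section
/- Let V be an n×n complex matrix, define (αβ;jk) := Im(V_{αj} V_{βk} conj(V_{αk}) conj(V_{βj})) and <αβ;jk> := Re(V_{αj} V_{βk} conj(V_{αk}) conj(V_{βj})). Then for all indices α, β, j, k, l, m one has <αβ;jk>·<αβ;lm> − <αβ;jm>·<αβ;kl> = (αβ;jl)·(αβ;km). -/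
open Matrix ComplexConjugate

/-- <αβ;jk><αβ;lm> − <αβ;jm><αβ;kl> = (αβ;jl)(αβ;km). -/
theorem phase_row_relation_II (n : ℕ) (V : Matrix (Fin n) (Fin n) ℂ)
    (α β j k l m : Fin n) :
    (V α j * V β k * conj (V α k) * conj (V β j)).re
        * (V α l * V β m * conj (V α m) * conj (V β l)).re
      - (V α j * V β m * conj (V α m) * conj (V β j)).re
        * (V α k * V β l * conj (V α l) * conj (V β k)).re
      = (V α j * V β l * conj (V α l) * conj (V β j)).im
        * (V α k * V β m * conj (V α m) * conj (V β k)).im := by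
  simp only [Complex.mul_re, Complex.mul_im, Complex.conj_re, Complex.conj_im]
  ring
end

section
/- Let V be an n×n complex matrix, define (αβ;jk) := Im(V_{αj} V_{βk} conj(V_{αk}) conj(V_{βj})) and <αβ;jk> := Re(V_{αj} V_{βk} conj(V_{αk}) conj(V_{βj})). Then for all indices α, β, γ, δ, j, k one has <αβ;jk>·<γδ;jk> − <αδ;jk>·<βγ;jk> = (αγ;jk)·(βδ;jk). -/
open Matrix ComplexConjugate

/-- <αβ;jk><γδ;jk> − <αδ;jk><βγ;jk> = (αγ;jk)(βδ;jk). -/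
theorem phase_column_relation_II (n : ℕ) (V : Matrix (Fin n) (Fin n) ℂ)
    (α β γ δ j k : Fin n) :
    (V α j * V β k * conj (V α k) * conj (V β j)).re
        * (V γ j * V δ k * conj (V γ k) * conj (V δ j)).re
      - (V α j * V δ k * conj (V α k) * conj (V δ j)).re
        * (V β j * V γ k * conj (V β k) * conj (V γ j)).re
      = (V α j * V γ k * conj (V α k) * conj (V γ j)).im
        * (V β j * V δ k * conj (V β k) * conj (V δ j)).im := by
  simp only [Complex.mul_re, Complex.mul_im, Complex.conj_re, Complex.conj_im]
  ring
end
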